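/- arXiv:1708.07052 — 2 statements merged into one kernel-verified Lean document; each statement's English description precedes it below -/
import Mathlib

section
/- Let f : [0,T] → ℝ be nondecreasing, and suppose sup_n Σ_{i=1}^{2^n} (T/2^n)·Ψ((f(iT/2^n) − f((i−1)T/2^n))/(T/2^n)) < ∞, where Ψ is the truncated Poisson rate function. Then f is absolutely continuous on [0,T]. -/
/-- The truncated Poisson rate function `Ψ(λ) = λ log(max λ 1) − (max λ 1 − 1)`. -/
noncomputable def trPoisson (l : ℝ) : ℝ := l * Real.log (max l 1) - (max l 1 - 1)

/-- Absolute continuity of a function on the interval `[a,b]`. -/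
def AbsolutelyContinuousOnIcc (f : ℝ → ℝ) (a b : ℝ) : Prop :=
  ∀ ε > (0:ℝ), ∃ δ > (0:ℝ), ∀ (n : ℕ) (s t : Fin n → ℝ),
    (∀ i, a ≤ s i ∧ s i ≤ t i ∧ t i ≤ b) →
    (Pairwise fun i j => Disjoint (Set.Ioo (s i) (t i)) (Set.Ioo (s j) (t j))) →
    (∑ i, (t i - s i)) ≤ δ → (∑ i, |f (t i) - f (s i)|) ≤ ε

/-
Cut `[0,T]` into `2^N` cells of length `h`. For a disjoint family of intervals `(s i, t i)`, the
total increment of the nondecreasing `f` is at most the sum of the cell increments `Δ k` over the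
cells the family meets, and there are at most `∑ (t i - s i) / h + 2 m` such cells. Young's
inequality `c λ ≤ Ψ(λ) + exp c - 1` at `λ = Δ k / h` then bounds `c ∑ (f (t i) - f (s i))` by
`M + (∑ (t i - s i) + 2 m h) (exp c - 1)`. Letting `N → ∞`, choosing `c` with `M ≤ c ε / 2` and
then `δ` small makes this at most `c ε`.
-/

open Real Finset Filter Topology

-- Young's inequality: `exp c - 1` is the convex conjugate of `Ψ` at `c ≥ 0`.
theorem mul_le_trPoisson_add {c : ℝ} (hc : 0 ≤ c) (l : ℝ) : c * l ≤ trPoisson l + (exp c - 1) := by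
  unfold trPoisson
  rcases le_total l 1 with hl | hl
  · rw [max_eq_right hl, log_one]
    nlinarith [add_one_le_exp c]
  · rw [max_eq_left hl]
    have hl0 : 0 < l := one_pos.trans_le hl
    have key := add_one_le_exp (c - log l)
    rw [exp_sub, exp_log hl0, le_div_iff₀ hl0] at key
    nlinarith

theorem trPoisson_nonneg (l : ℝ) : 0 ≤ trPoisson l := by
  simpa using mul_le_trPoisson_add le_rfl l

theorem mul_sum_le_sum_trPoisson_add {α : Type*} {S R : Finset α} (hSR : S ⊆ R) {h c : ℝ}
    (hh : 0 < h) (hc : 0 ≤ c) (x : α → ℝ) :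
    c * ∑ k ∈ S, x k ≤ ∑ k ∈ R, h * trPoisson (x k / h) + #S * h * (exp c - 1) := calc
  c * ∑ k ∈ S, x k = ∑ k ∈ S, h * (c * (x k / h)) := by
    rw [mul_sum]; congr! 1; field_simp
  _ ≤ ∑ k ∈ S, h * (trPoisson (x k / h) + (exp c - 1)) := by
    gcongr; exact mul_le_trPoisson_add hc _
  _ = ∑ k ∈ S, h * trPoisson (x k / h) + #S * h * (exp c - 1) := by
    rw [sum_congr rfl fun k _ => mul_add h _ _, sum_add_distrib, sum_const, nsmul_eq_mul]; ring
  _ ≤ ∑ k ∈ R, h * trPoisson (x k / h) + #S * h * (exp c - 1) := by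
    gcongr 1
    exact sum_le_sum_of_subset_of_nonneg hSR fun k _ _ => mul_nonneg hh.le (trPoisson_nonneg _)

theorem Ioo_max_min_subset (a b s t : ℝ) :
    Set.Ioo (max a (min s b)) (max a (min t b)) ⊆ Set.Ioo s t := by
  intro y ⟨h1, h2⟩
  simp only [max_lt_iff, lt_max_iff, lt_min_iff, min_lt_iff] at h1 h2
  constructor <;> grind

theorem MonotoneOn.sum_sub_le_sub {ι : Type*} {g : ℝ → ℝ} {a b : ℝ}
    (hg : MonotoneOn g (Set.Icc a b)) (hab : a ≤ b) (S : Finset ι) {u v : ι → ℝ}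
    (huv : ∀ i ∈ S, a ≤ u i ∧ u i < v i ∧ v i ≤ b)
    (hdisj : (S : Set ι).Pairwise fun i j => Disjoint (Set.Ioo (u i) (v i)) (Set.Ioo (u j) (v j))) :
    ∑ i ∈ S, (g (v i) - g (u i)) ≤ g b - g a := by
  classical
  induction S using Finset.induction_on_max_value v generalizing b with
  | empty => simpa using hg ⟨le_rfl, hab⟩ ⟨hab, le_rfl⟩ hab
  | insert i S hiS hmax ih =>
    obtain ⟨hai, hui, hib⟩ := huv i (mem_insert_self i S)
    have hleft : ∀ j ∈ S, v j ≤ u i := fun j hj => by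
      by_contra! hlt
      have hjuv := huv j (mem_insert_of_mem hj)
      have hmeet : (Set.Ioo (u j) (v j) ∩ Set.Ioo (u i) (v i)).Nonempty := by
        rw [Set.Ioo_inter_Ioo, Set.nonempty_Ioo]
        exact lt_min (max_lt hjuv.2.1 hlt) (max_lt (hjuv.2.1.trans_le (hmax j hj)) hui)
      exact Set.not_disjoint_iff_nonempty_inter.mpr hmeet
        (hdisj (mem_insert_of_mem hj) (mem_insert_self i S) (ne_of_mem_of_not_mem hj hiS))
    rw [sum_insert hiS]
    have := ih (hg.mono (Set.Icc_subset_Icc_right (hui.le.trans hib))) hai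
      (fun j hj => ⟨(huv j (mem_insert_of_mem hj)).1, (huv j (mem_insert_of_mem hj)).2.1,
        hleft j hj⟩)
      (hdisj.mono (by simp))
    linarith [hg ⟨hai.trans hui.le, hib⟩ ⟨hab, le_rfl⟩ hib]

theorem MonotoneOn.sum_max_min_sub_le {ι : Type*} [Fintype ι] {g : ℝ → ℝ} {a b : ℝ}
    (hg : MonotoneOn g (Set.Icc a b)) (hab : a ≤ b) {s t : ι → ℝ} (hst : ∀ i, s i ≤ t i)
    (hdisj : Pairwise fun i j => Disjoint (Set.Ioo (s i) (t i)) (Set.Ioo (s j) (t j))) :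
    ∑ i, (g (max a (min (t i) b)) - g (max a (min (s i) b))) ≤ g b - g a := by
  classical
  have hclamp : Monotone fun x => max a (min x b) := fun x y hxy =>
    max_le_max le_rfl (min_le_min_right b hxy)
  have hmem : ∀ x, a ≤ max a (min x b) ∧ max a (min x b) ≤ b :=
    fun x => ⟨le_max_left _ _, max_le hab (min_le_right _ _)⟩
  have hzero : ∑ i with ¬max a (min (s i) b) < max a (min (t i) b),
      (g (max a (min (t i) b)) - g (max a (min (s i) b))) = 0 := sum_eq_zero fun i hi => by
    have heq : max a (min (s i) b) = max a (min (t i) b) :=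
      le_antisymm (hclamp (hst i)) (not_lt.mp (mem_filter.mp hi).2)
    rw [heq, sub_self]
  rw [← sum_filter_add_sum_filter_not univ fun i => max a (min (s i) b) < max a (min (t i) b),
    hzero, add_zero]
  exact hg.sum_sub_le_sub hab _ (fun i hi => ⟨(hmem _).1, (mem_filter.mp hi).2, (hmem _).2⟩)
    fun i _ j _ hij => (hdisj hij).mono (Ioo_max_min_subset ..) (Ioo_max_min_subset ..)

theorem sum_range_max_min_sub (g : ℝ → ℝ) {x : ℕ → ℝ} (hx : Monotone x) {P : ℕ} {y : ℝ}
    (h0 : x 0 ≤ y) (hP : y ≤ x P) :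
    ∑ k ∈ range P, (g (max (x k) (min y (x (k + 1)))) - g (x k)) = g y - g (x 0) := by
  have hterm : ∀ k, g (max (x k) (min y (x (k + 1)))) - g (x k) =
      g (min y (x (k + 1))) - g (min y (x k)) := fun k => by
    rcases le_total y (x k) with hy | hy
    · rw [min_eq_left (hy.trans (hx k.le_succ)), min_eq_left hy, max_eq_left hy, sub_self,
        sub_self]
    · rw [min_eq_right hy, max_eq_right (le_min hy (hx k.le_succ))]
  rw [sum_congr rfl fun k _ => hterm k, sum_range_sub (fun k => g (min y (x k))),
    min_eq_left hP, min_eq_right h0]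

theorem max_min_eq_of_notMem_Ico {h s t : ℝ} (hh : 0 < h) (hs : 0 ≤ s) (hst : s ≤ t) {k : ℕ}
    (hk : k ∉ Ico ⌊s / h⌋₊ ⌈t / h⌉₊) :
    max (k * h) (min t ((k + 1) * h)) = max (k * h) (min s ((k + 1) * h)) := by
  rw [mem_Ico, not_and_or, not_le, not_lt] at hk
  rcases hk with hk | hk
  · have hks : ((k + 1 : ℕ) : ℝ) ≤ s / h := (Nat.le_floor_iff (by positivity)).mp hk
    rw [le_div_iff₀ hh, Nat.cast_succ] at hks
    rw [min_eq_right hks, min_eq_right (hks.trans hst)]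
  · have htk : t ≤ k * h := (div_le_iff₀ hh).mp (Nat.ceil_le.mp hk)
    rw [max_eq_left ((min_le_left _ _).trans htk),
      max_eq_left ((min_le_left _ _).trans (hst.trans htk))]

noncomputable def coveringCells {ι : Type*} [Fintype ι] (h : ℝ) (s t : ι → ℝ) : Finset ℕ :=
  univ.biUnion fun i => Ico ⌊s i / h⌋₊ ⌈t i / h⌉₊

section coveringCells

variable {ι : Type*} [Fintype ι] {h : ℝ} {s t : ι → ℝ}

theorem card_coveringCells_mul_le (hh : 0 < h) (hst : ∀ i, 0 ≤ s i ∧ s i ≤ t i) :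
    #(coveringCells h s t) * h ≤ ∑ i, (t i - s i) + 2 * Fintype.card ι * h := by
  have hcell : ∀ i, (#(Ico ⌊s i / h⌋₊ ⌈t i / h⌉₊) : ℝ) * h ≤ t i - s i + 2 * h := fun i => by
    obtain ⟨hs, hst⟩ := hst i
    have hfc : ⌊s i / h⌋₊ ≤ ⌈t i / h⌉₊ :=
      (Nat.floor_le_ceil _).trans (Nat.ceil_mono (by gcongr))
    have hceil := Nat.ceil_lt_add_one (div_nonneg (hs.trans hst) hh.le)
    have hfloor := Nat.lt_floor_add_one (s i / h)
    rw [Nat.card_Ico, Nat.cast_sub hfc]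
    calc ((⌈t i / h⌉₊ : ℝ) - ⌊s i / h⌋₊) * h ≤ (t i / h - s i / h + 2) * h := by
          gcongr; linarith
      _ = t i - s i + 2 * h := by field_simp
  calc (#(coveringCells h s t) : ℝ) * h ≤ ∑ i, (#(Ico ⌊s i / h⌋₊ ⌈t i / h⌉₊) : ℝ) * h := by
        rw [← sum_mul]; gcongr; exact_mod_cast card_biUnion_le
    _ ≤ ∑ i, (t i - s i + 2 * h) := sum_le_sum fun i _ => hcell i
    _ = ∑ i, (t i - s i) + 2 * Fintype.card ι * h := by
        rw [sum_add_distrib, sum_const, card_univ, nsmul_eq_mul]; ring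

theorem coveringCells_subset_range (hh : 0 < h) {P : ℕ} (ht : ∀ i, t i ≤ P * h) :
    coveringCells h s t ⊆ range P :=
  biUnion_subset.mpr fun i _ _ hk => mem_range.mpr <|
    (mem_Ico.mp hk).2.trans_le (Nat.ceil_le.mpr ((div_le_iff₀ hh).mpr (ht i)))

end coveringCells

section grid

variable {ι : Type*} [Fintype ι] {f : ℝ → ℝ} {h T : ℝ} {P : ℕ} {s t : ι → ℝ}

theorem MonotoneOn.sum_sub_le_sum_coveringCells (hh : 0 < h) (hPh : P * h = T)
    (hf : MonotoneOn f (Set.Icc 0 T)) (hst : ∀ i, 0 ≤ s i ∧ s i ≤ t i ∧ t i ≤ T)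
    (hdisj : Pairwise fun i j => Disjoint (Set.Ioo (s i) (t i)) (Set.Ioo (s j) (t j))) :
    ∑ i, (f (t i) - f (s i)) ≤ ∑ k ∈ coveringCells h s t, (f ((k + 1) * h) - f (k * h)) := by
  have hsub : coveringCells h s t ⊆ range P :=
    coveringCells_subset_range hh fun i => hPh ▸ (hst i).2.2
  -- the contribution of the interval `(s i, t i)` to the cell `[k h, (k + 1) h]`
  set q : ι → ℕ → ℝ := fun i k =>
    f (max (k * h) (min (t i) ((k + 1) * h))) - f (max (k * h) (min (s i) ((k + 1) * h)))
  have hgrid : Monotone fun k : ℕ => (k : ℝ) * h := fun _ _ hkl =>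
    mul_le_mul_of_nonneg_right (Nat.cast_le.mpr hkl) hh.le
  have hsplit : ∀ i, f (t i) - f (s i) = ∑ k ∈ range P, q i k := fun i => by
    obtain ⟨hs, hst, ht⟩ := hst i
    have telescope := fun y (h0 : 0 ≤ y) (hyT : y ≤ T) =>
      sum_range_max_min_sub f hgrid (P := P) (y := y) (by simpa using h0) (by simpa [hPh] using hyT)
    simp only [Nat.cast_zero, zero_mul, Nat.cast_succ] at telescope
    rw [← sub_sub_sub_cancel_right (f (t i)) (f (s i)) (f 0), ← telescope _ (hs.trans hst) ht,
      ← telescope _ hs (hst.trans ht), ← sum_sub_distrib]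
    exact sum_congr rfl fun k _ => sub_sub_sub_cancel_right _ _ _
  calc ∑ i, (f (t i) - f (s i)) = ∑ k ∈ range P, ∑ i, q i k := by
        simp_rw [hsplit]; exact sum_comm
    _ = ∑ k ∈ coveringCells h s t, ∑ i, q i k := by
        refine (sum_subset hsub fun k _ hk => sum_eq_zero fun i _ => ?_).symm
        rw [sub_eq_zero]
        exact congrArg f <| max_min_eq_of_notMem_Ico hh (hst i).1 (hst i).2.1
          fun hki => hk (mem_biUnion.mpr ⟨i, mem_univ i, hki⟩)
    _ ≤ ∑ k ∈ coveringCells h s t, (f ((k + 1) * h) - f (k * h)) := sum_le_sum fun k hk => by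
        have hkP : (k + 1 : ℝ) * h ≤ T := by
          rw [← hPh]; gcongr; exact_mod_cast mem_range.mp (hsub hk)
        exact (hf.mono (Set.Icc_subset_Icc (by positivity) hkP)).sum_max_min_sub_le
          (by gcongr; linarith) (fun i => (hst i).2.1) hdisj

theorem MonotoneOn.mul_sum_sub_le_sum_trPoisson_add (hh : 0 < h) (hPh : P * h = T)
    (hf : MonotoneOn f (Set.Icc 0 T)) (hst : ∀ i, 0 ≤ s i ∧ s i ≤ t i ∧ t i ≤ T)
    (hdisj : Pairwise fun i j => Disjoint (Set.Ioo (s i) (t i)) (Set.Ioo (s j) (t j)))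
    {c : ℝ} (hc : 0 ≤ c) :
    c * ∑ i, (f (t i) - f (s i)) ≤
      ∑ k ∈ range P, h * trPoisson ((f ((k + 1) * h) - f (k * h)) / h) +
        (∑ i, (t i - s i) + 2 * Fintype.card ι * h) * (exp c - 1) := calc
  c * ∑ i, (f (t i) - f (s i)) ≤
      c * ∑ k ∈ coveringCells h s t, (f ((k + 1) * h) - f (k * h)) := by
    gcongr; exact hf.sum_sub_le_sum_coveringCells hh hPh hst hdisj
  _ ≤ ∑ k ∈ range P, h * trPoisson ((f ((k + 1) * h) - f (k * h)) / h) +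
        #(coveringCells h s t) * h * (exp c - 1) :=
    mul_sum_le_sum_trPoisson_add (coveringCells_subset_range hh fun i => hPh ▸ (hst i).2.2)
      hh hc _
  _ ≤ _ := by
    gcongr
    · exact sub_nonneg.mpr (one_le_exp hc)
    · exact card_coveringCells_mul_le hh fun i => ⟨(hst i).1, (hst i).2.1⟩

theorem MonotoneOn.mul_sum_sub_le_of_dyadic_trPoisson_le (hT : 0 < T)
    (hf : MonotoneOn f (Set.Icc 0 T)) {M : ℝ}
    (hM : ∀ n : ℕ, ∑ k ∈ range (2 ^ n), T / 2 ^ n *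
      trPoisson ((f ((k + 1) * (T / 2 ^ n)) - f (k * (T / 2 ^ n))) / (T / 2 ^ n)) ≤ M)
    (hst : ∀ i, 0 ≤ s i ∧ s i ≤ t i ∧ t i ≤ T)
    (hdisj : Pairwise fun i j => Disjoint (Set.Ioo (s i) (t i)) (Set.Ioo (s j) (t j)))
    {c : ℝ} (hc : 0 ≤ c) :
    c * ∑ i, (f (t i) - f (s i)) ≤ M + (∑ i, (t i - s i)) * (exp c - 1) := by
  have hlevel : ∀ N : ℕ, c * ∑ i, (f (t i) - f (s i)) ≤
      M + (∑ i, (t i - s i) + 2 * Fintype.card ι * (T / 2 ^ N)) * (exp c - 1) := fun N =>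
    (hf.mul_sum_sub_le_sum_trPoisson_add (P := 2 ^ N) (h := T / 2 ^ N) (by positivity)
      (by push_cast; field_simp) hst hdisj hc).trans (by gcongr; exact hM N)
  have hmesh : Tendsto (fun N : ℕ => T / 2 ^ N) atTop (𝓝 0) :=
    tendsto_const_nhds.div_atTop (tendsto_pow_atTop_atTop_of_one_lt one_lt_two)
  refine ge_of_tendsto' (x := atTop) ?_ hlevel
  simpa using (((hmesh.const_mul (2 * (Fintype.card ι : ℝ))).const_add _).mul_const _).const_add M

end grid

/-- If `f` is nondecreasing on `[0,T]` and the dyadic discretized `Ψ`-functionals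
are uniformly bounded over all dyadic levels, then `f` is absolutely continuous. -/
theorem stmt5 (T : ℝ) (hT : 0 < T) (f : ℝ → ℝ)
    (hmono : MonotoneOn f (Set.Icc 0 T))
    (hsum : ∃ M : ℝ, ∀ n : ℕ, ∑ i ∈ Finset.range (2 ^ n),
      (T / 2 ^ n) *
        trPoisson ((f (((i:ℝ) + 1) * T / 2 ^ n) - f ((i:ℝ) * T / 2 ^ n)) / (T / 2 ^ n)) ≤ M) :
    AbsolutelyContinuousOnIcc f 0 T := by
  obtain ⟨M, hM⟩ := hsum
  simp only [mul_div_assoc] at hM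
  intro ε hε
  set c := 2 * max M 1 / ε
  have hc : 0 < c := by positivity
  set δ := c * ε / (4 * exp c)
  refine ⟨δ, by positivity, fun m s t hst hdisj hlen => ?_⟩
  have hbound := hmono.mul_sum_sub_le_of_dyadic_trPoisson_le hT hM hst hdisj hc.le
  have hMc : M ≤ c * ε / 2 := by
    rw [div_mul_cancel₀ _ hε.ne', mul_div_cancel_left₀ _ two_ne_zero]; exact le_max_left M 1
  have hδc : (∑ i, (t i - s i)) * (exp c - 1) ≤ c * ε / 4 := calc
    (∑ i, (t i - s i)) * (exp c - 1) ≤ δ * exp c := by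
      have := one_le_exp hc.le; gcongr; linarith
    _ = c * ε / 4 := by simp only [δ]; field_simp
  have habs : ∀ i, |f (t i) - f (s i)| = f (t i) - f (s i) := fun i => by
    obtain ⟨hs, hst, ht⟩ := hst i
    exact abs_of_nonneg (sub_nonneg.mpr (hmono ⟨hs, hst.trans ht⟩ ⟨hs.trans hst, ht⟩ hst))
  simp only [habs]
  refine le_of_mul_le_mul_left ?_ hc
  linarith [mul_pos hc hε]
end

section
/- Fix ρ⁻, ρ⁺ ∈ (0,1) with ρ⁻ + ρ⁺ = 1 and ρ⁻ ≥ ρ⁺, and let f(ξ) := ρ⁻·ξ for ξ < 0 and ρ⁺·ξ for ξ ≥ 0. Then for every t₀ > 0, the Hopf–Lax value inf over piecewise C¹ paths w with w(t₀) = 0 of ∫₀^{t₀} φ(w'(s)) ds + f(w(0)) equals ρ⁻(1−ρ⁻)·t₀. -/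
/-- The Hopf–Lax kernel `φ`. -/
noncomputable def hlKernel (ξ : ℝ) : ℝ :=
  if ξ ≤ -1 then 0 else if ξ < 1 then (ξ + 1) ^ 2 / 4 else ξ

/-- A path is piecewise `C¹` on `[a,b]`: it is continuous, and `C¹` on each piece of
some finite partition of `[a,b]`. -/
def PiecewiseC1On (w : ℝ → ℝ) (a b : ℝ) : Prop :=
  ContinuousOn w (Set.Icc a b) ∧
  ∃ (k : ℕ) (s : Fin (k + 1) → ℝ), StrictMono s ∧ s 0 = a ∧ s (Fin.last k) = b ∧
    ∀ i : Fin k, ContDiffOn ℝ 1 w (Set.Icc (s i.castSucc) (s i.succ))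


/-!
For `ρ ∈ [0,1]` the affine function `ξ ↦ ρ ξ + ρ(1-ρ)` lies below the convex kernel `φ` and
touches it at `ξ = 2ρ - 1`. Integrating `ρ w' + ρ(1-ρ) ≤ φ(w')` along any piecewise `C¹` path
ending at `0` gives `ρ(1-ρ) t₀ ≤ ∫ φ(w') + ρ w(0)`; taking `ρ = ρ⁻` or `ρ = ρ⁺` according to the
sign of `w(0)`, and using `ρ⁺(1-ρ⁺) = ρ⁻(1-ρ⁻)`, bounds every cost below. The straight path of
slope `2ρ⁻ - 1 ≥ 0` stays on the tangency point and attains the bound.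
-/

open Set MeasureTheory intervalIntegral

lemma hlKernel_eq_ite_le (ξ : ℝ) :
    hlKernel ξ = if ξ ≤ -1 then 0 else if ξ ≤ 1 then (ξ + 1) ^ 2 / 4 else ξ := by
  unfold hlKernel
  split_ifs <;> first
    | rfl
    | linarith
    | obtain rfl : ξ = 1 := by linarith
      norm_num

lemma continuous_hlKernel : Continuous hlKernel := by
  rw [funext hlKernel_eq_ite_le]
  refine Continuous.if_le continuous_const
    (Continuous.if_le (by fun_prop) continuous_id continuous_id continuous_const ?_)
    continuous_id continuous_const ?_ <;>
  · rintro x rfl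
    norm_num

lemma affine_le_hlKernel {ρ : ℝ} (h0 : 0 ≤ ρ) (h1 : ρ ≤ 1) (ξ : ℝ) :
    ρ * ξ + ρ * (1 - ρ) ≤ hlKernel ξ := by
  unfold hlKernel
  split_ifs with hle hlt
  · nlinarith
  · nlinarith [sq_nonneg ((ξ + 1) / 2 - ρ)]
  · nlinarith

lemma hlKernel_two_mul_sub_one {ρ : ℝ} (h0 : 0 ≤ ρ) (h1 : ρ ≤ 1) :
    hlKernel (2 * ρ - 1) = ρ ^ 2 := by
  unfold hlKernel
  split_ifs with hle hlt
  · obtain rfl : ρ = 0 := by linarith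
    norm_num
  · ring
  · obtain rfl : ρ = 1 := by linarith
    norm_num

section C1Piece

variable {w : ℝ → ℝ} {a b : ℝ}

/-- On the open interval, `deriv w` agrees with the continuous `derivWithin w (Icc a b)`. -/
lemma ContDiffOn.intervalIntegrable_comp_deriv {F : ℝ → ℝ} (hF : Continuous F) (hab : a ≤ b)
    (hw : ContDiffOn ℝ 1 w (Icc a b)) :
    IntervalIntegrable (fun s => F (deriv w s)) volume a b := by
  rcases hab.eq_or_lt with rfl | hlt
  · exact IntervalIntegrable.refl
  have hcont : ContinuousOn (fun s => F (derivWithin w (Icc a b) s)) (Icc a b) :=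
    hF.comp_continuousOn (hw.continuousOn_derivWithin (uniqueDiffOn_Icc hlt) le_rfl)
  rw [intervalIntegrable_iff_integrableOn_Ioo_of_le hab]
  refine (hcont.integrableOn_Icc.mono_set Ioo_subset_Icc_self).congr_fun (fun x hx => ?_)
    measurableSet_Ioo
  exact congrArg F (derivWithin_of_mem_nhds (Icc_mem_nhds hx.1 hx.2))

lemma ContDiffOn.intervalIntegrable_deriv (hab : a ≤ b) (hw : ContDiffOn ℝ 1 w (Icc a b)) :
    IntervalIntegrable (deriv w) volume a b :=
  hw.intervalIntegrable_comp_deriv continuous_id hab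

lemma ContDiffOn.integral_deriv_eq_sub (hab : a ≤ b) (hw : ContDiffOn ℝ 1 w (Icc a b)) :
    ∫ s in a..b, deriv w s = w b - w a :=
  integral_eq_sub_of_hasDerivAt_of_le hab hw.continuousOn
    (fun x hx => ((hw.differentiableOn one_ne_zero x (Ioo_subset_Icc_self hx)).differentiableAt
      (Icc_mem_nhds hx.1 hx.2)).hasDerivAt)
    (hw.intervalIntegrable_deriv hab)

lemma ContDiffOn.affine_le_integral_comp_deriv {F : ℝ → ℝ} {ρ c : ℝ} (hF : Continuous F)
    (hline : ∀ ξ, ρ * ξ + c ≤ F ξ) (hab : a ≤ b) (hw : ContDiffOn ℝ 1 w (Icc a b)) :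
    ρ * (w b - w a) + c * (b - a) ≤ ∫ s in a..b, F (deriv w s) :=
  calc ρ * (w b - w a) + c * (b - a) = ∫ s in a..b, (ρ * deriv w s + c) := by
        rw [integral_add ((hw.intervalIntegrable_deriv hab).const_mul ρ)
          intervalIntegrable_const, intervalIntegral.integral_const_mul, hw.integral_deriv_eq_sub hab,
          intervalIntegral.integral_const, smul_eq_mul]
        ring
    _ ≤ ∫ s in a..b, F (deriv w s) :=
        integral_mono_on hab
          (hw.intervalIntegrable_comp_deriv (F := fun ξ => ρ * ξ + c) (by fun_prop) hab)
          (hw.intervalIntegrable_comp_deriv hF hab) (fun x _ => hline _)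

end C1Piece

lemma sub_le_integral_of_partition {g G : ℝ → ℝ} :
    ∀ {k : ℕ} (s : Fin (k + 1) → ℝ),
      (∀ i : Fin k, IntervalIntegrable g volume (s i.castSucc) (s i.succ)) →
      (∀ i : Fin k, G (s i.succ) - G (s i.castSucc) ≤ ∫ x in s i.castSucc..s i.succ, g x) →
      IntervalIntegrable g volume (s 0) (s (Fin.last k)) ∧
        G (s (Fin.last k)) - G (s 0) ≤ ∫ x in s 0..s (Fin.last k), g x
  | 0, _, _, _ => by simp
  | k + 1, s, hint, hle => by
    obtain ⟨hint₀, hle₀⟩ := sub_le_integral_of_partition (fun i => s i.castSucc)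
      (fun i => by simpa using hint i.castSucc) (fun i => by simpa using hle i.castSucc)
    rw [Fin.castSucc_zero] at hint₀ hle₀
    have hint_last : IntervalIntegrable g volume (s (Fin.last k).castSucc) (s (Fin.last (k + 1))) :=
      hint (Fin.last k)
    have hle_last := hle (Fin.last k)
    rw [Fin.succ_last] at hle_last
    refine ⟨hint₀.trans hint_last, ?_⟩
    rw [← integral_add_adjacent_intervals hint₀ hint_last]
    linarith

lemma PiecewiseC1On.affine_le_integral_comp_deriv {w F : ℝ → ℝ} {a b ρ c : ℝ}
    (hF : Continuous F) (hline : ∀ ξ, ρ * ξ + c ≤ F ξ) (hw : PiecewiseC1On w a b) :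
    ρ * (w b - w a) + c * (b - a) ≤ ∫ s in a..b, F (deriv w s) := by
  obtain ⟨-, k, s, hs, rfl, rfl, hC1⟩ := hw
  have hle (i : Fin k) : s i.castSucc ≤ s i.succ := (hs Fin.castSucc_lt_succ).le
  have key := (sub_le_integral_of_partition (G := fun x => ρ * w x + c * x) s
    (fun i => (hC1 i).intervalIntegrable_comp_deriv hF (hle i))
    (fun i => by
      have := (hC1 i).affine_le_integral_comp_deriv hF hline (hle i)
      linarith)).2
  linarith

lemma ContDiff.piecewiseC1On {w : ℝ → ℝ} {a b : ℝ} (hw : ContDiff ℝ 1 w) (hab : a < b) :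
    PiecewiseC1On w a b :=
  ⟨hw.continuous.continuousOn, 1, ![a, b], by simpa [Fin.strictMono_iff_lt_succ] using hab,
    rfl, rfl, fun _ => hw.contDiffOn⟩

lemma PiecewiseC1On.mul_one_sub_mul_le_cost {w : ℝ → ℝ} {t₀ ρ : ℝ} (hw : PiecewiseC1On w 0 t₀)
    (hwt : w t₀ = 0) (h0 : 0 ≤ ρ) (h1 : ρ ≤ 1) :
    ρ * (1 - ρ) * t₀ ≤ (∫ s in (0:ℝ)..t₀, hlKernel (deriv w s)) + ρ * w 0 := by
  have := hw.affine_le_integral_comp_deriv continuous_hlKernel (affine_le_hlKernel h0 h1)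
  rw [hwt] at this
  linarith

/-- Hopf–Lax value across a stationary shock: with unit speed and initial data
`f(ξ) = ρ⁻ ξ` for `ξ < 0`, `f(ξ) = ρ⁺ ξ` for `ξ ≥ 0`, where `ρ⁻ + ρ⁺ = 1` and
`ρ⁻ ≥ ρ⁺`, the value at `(t₀, 0)` is `ρ⁻(1−ρ⁻) t₀`. -/
theorem stmt10 (ρm ρp t₀ : ℝ) (h1 : ρm ∈ Set.Ioo (0:ℝ) 1) (h2 : ρp ∈ Set.Ioo (0:ℝ) 1)
    (hsum : ρm + ρp = 1) (hge : ρp ≤ ρm) (ht₀ : 0 < t₀) :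
    IsGLB {y : ℝ | ∃ w : ℝ → ℝ, PiecewiseC1On w 0 t₀ ∧ w t₀ = 0 ∧
        y = (∫ s in (0:ℝ)..t₀, hlKernel (deriv w s)) +
          (if w 0 < 0 then ρm * w 0 else ρp * w 0)}
      (ρm * (1 - ρm) * t₀) := by
  obtain ⟨hm0, hm1⟩ := h1
  obtain ⟨hp0, hp1⟩ := h2
  refine ⟨?_, fun b hb => hb ?_⟩
  · rintro y ⟨w, hw, hwt, rfl⟩
    have hρp : ρp * (1 - ρp) = ρm * (1 - ρm) := by
      rw [show ρp = 1 - ρm by linarith]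
      ring
    split_ifs
    · exact hw.mul_one_sub_mul_le_cost hwt hm0.le hm1.le
    · rw [← hρp]
      exact hw.mul_one_sub_mul_le_cost hwt hp0.le hp1.le
  · have hslope : 0 ≤ 2 * ρm - 1 := by linarith
    have hderiv (x : ℝ) : deriv (fun s => (2 * ρm - 1) * (s - t₀)) x = 2 * ρm - 1 := by simp
    refine ⟨fun s => (2 * ρm - 1) * (s - t₀), (by fun_prop : ContDiff ℝ 1 _).piecewiseC1On ht₀,
      by simp, ?_⟩
    simp only [hderiv, hlKernel_two_mul_sub_one hm0.le hm1.le, intervalIntegral.integral_const,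
      smul_eq_mul, sub_zero]
    split_ifs <;> nlinarith
end
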